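/- Let {a_k} be a sequence in the unit disc D and {λ_k} a sequence of complex numbers with Σ_{k=1}^∞ |λ_k| < ∞. Then the series g(z) = Σ_{k=1}^∞ λ_k (a_k - z)/(1 - conj(a_k) z) converges for every z ∈ D, defines a bounded analytic function g on D, and g belongs to the minimal Besov space B¹, i.e., ∫_D |g''(z)| dA(z) < ∞. -/

import Mathlib

open Complex Filter Set MeasureTheory

open Metric
open scoped ENNReal NNReal

namespace Stmt12Aux

lemma den_lb (a z : ℂ) : 1 - ‖a‖ * ‖z‖ ≤ ‖1 - (starRingEnd ℂ) a * z‖ := by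
  calc 1 - ‖a‖ * ‖z‖ = ‖(1:ℂ)‖ - ‖(starRingEnd ℂ) a * z‖ := by simp [norm_mul]
    _ ≤ ‖1 - (starRingEnd ℂ) a * z‖ := norm_sub_norm_le _ _

lemma den_ne {a z : ℂ} (ha : ‖a‖ < 1) (hz : ‖z‖ < 1) : 1 - (starRingEnd ℂ) a * z ≠ 0 := by
  have h := den_lb a z
  intro h0
  rw [h0, norm_zero] at h
  nlinarith [norm_nonneg a, norm_nonneg z]

lemma normSq_le_one {a : ℂ} (ha : ‖a‖ < 1) : Complex.normSq a ≤ 1 := by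
  rw [Complex.normSq_eq_norm_sq]
  nlinarith [norm_nonneg a]

lemma norm_normSq_sub_one {a : ℂ} (ha : ‖a‖ < 1) :
    ‖((Complex.normSq a : ℂ) - 1)‖ = 1 - Complex.normSq a := by
  have h1 : ((Complex.normSq a : ℂ) - 1) = ((Complex.normSq a - 1 : ℝ) : ℂ) := by push_cast; ring
  rw [h1, Complex.norm_real, Real.norm_eq_abs,
    abs_of_nonpos (by linarith [normSq_le_one ha])]
  ring

lemma phi_le_one {a z : ℂ} (ha : ‖a‖ < 1) (hz : ‖z‖ < 1) :
    ‖(a - z) / (1 - (starRingEnd ℂ) a * z)‖ ≤ 1 := by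
  have key : Complex.normSq (1 - (starRingEnd ℂ) a * z) - Complex.normSq (a - z)
      = (1 - Complex.normSq a) * (1 - Complex.normSq z) := by
    simp [Complex.normSq_apply, Complex.mul_re, Complex.mul_im, Complex.sub_re, Complex.sub_im]
    ring
  have ha' : Complex.normSq a < 1 := by
    rw [Complex.normSq_eq_norm_sq]; nlinarith [norm_nonneg a]
  have hz' : Complex.normSq z < 1 := by
    rw [Complex.normSq_eq_norm_sq]; nlinarith [norm_nonneg z]
  have h2 : Complex.normSq (a - z) ≤ Complex.normSq (1 - (starRingEnd ℂ) a * z) := by nlinarith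
  rw [norm_div]
  have hd : (0:ℝ) < ‖1 - (starRingEnd ℂ) a * z‖ := norm_pos_iff.mpr (den_ne ha hz)
  rw [div_le_one hd]
  have : ‖a - z‖ ≤ ‖1 - (starRingEnd ℂ) a * z‖ := by
    rw [Complex.norm_def, Complex.norm_def]
    exact Real.sqrt_le_sqrt h2
  simpa using this

lemma hasDerivAt_phi (a : ℂ) {z : ℂ} (h : 1 - (starRingEnd ℂ) a * z ≠ 0) :
    HasDerivAt (fun w => (a - w) / (1 - (starRingEnd ℂ) a * w))
      (((Complex.normSq a : ℂ) - 1) / (1 - (starRingEnd ℂ) a * z) ^ 2) z := by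
  have h1 : HasDerivAt (fun w : ℂ => a - w) (-1) z := (hasDerivAt_id z).const_sub a
  have h2 : HasDerivAt (fun w : ℂ => 1 - (starRingEnd ℂ) a * w) (-((starRingEnd ℂ) a)) z :=
    by simpa using ((hasDerivAt_id z).const_mul ((starRingEnd ℂ) a)).const_sub 1
  have hc : (starRingEnd ℂ) a * a = (Complex.normSq a : ℂ) := by
    rw [mul_comm, Complex.mul_conj]
  have hh := h1.div h2 h
  have hnum : (-1 : ℂ) * (1 - (starRingEnd ℂ) a * z) - (a - z) * -((starRingEnd ℂ) a)
      = (Complex.normSq a : ℂ) - 1 := by linear_combination hc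
  rw [hnum] at hh
  exact hh

lemma hasDerivAt_phi' (a : ℂ) {z : ℂ} (h : 1 - (starRingEnd ℂ) a * z ≠ 0) :
    HasDerivAt (fun w => ((Complex.normSq a : ℂ) - 1) / (1 - (starRingEnd ℂ) a * w) ^ 2)
      (2 * (starRingEnd ℂ) a * ((Complex.normSq a : ℂ) - 1) / (1 - (starRingEnd ℂ) a * z) ^ 3)
      z := by
  have h2 : HasDerivAt (fun w : ℂ => 1 - (starRingEnd ℂ) a * w) (-((starRingEnd ℂ) a)) z :=
    by simpa using ((hasDerivAt_id z).const_mul ((starRingEnd ℂ) a)).const_sub 1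
  have h3 : HasDerivAt (fun w : ℂ => (1 - (starRingEnd ℂ) a * w) ^ 2)
      (2 * (1 - (starRingEnd ℂ) a * z) ^ 1 * (-((starRingEnd ℂ) a))) z := h2.pow 2
  have h4 := (hasDerivAt_const z ((Complex.normSq a : ℂ) - 1)).div h3 (pow_ne_zero 2 h)
  refine h4.congr_deriv ?_
  rw [div_eq_div_iff (pow_ne_zero 2 (pow_ne_zero 2 h)) (pow_ne_zero 3 h)]
  ring

lemma annuli (ζ : ℂ) {r₀ : ℝ} (hr : 0 < r₀) :
    ∫⁻ z in {z : ℂ | r₀ ≤ ‖z - ζ‖}, ENNReal.ofReal ((‖z - ζ‖ ^ 3)⁻¹)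
      ≤ ENNReal.ofReal (8 * Real.pi / r₀) := by
  set A : ℕ → Set ℂ := fun n => {z | r₀ * 2 ^ n ≤ ‖z - ζ‖ ∧ ‖z - ζ‖ < r₀ * 2 ^ (n + 1)} with hA
  have hmnorm : Measurable fun z : ℂ => ‖z - ζ‖ :=
    (continuous_id.sub continuous_const).norm.measurable
  have hmeasA : ∀ n, MeasurableSet (A n) := fun n => by
    have : A n = {z : ℂ | r₀ * 2 ^ n ≤ ‖z - ζ‖} ∩ {z : ℂ | ‖z - ζ‖ < r₀ * 2 ^ (n + 1)} := by
      ext z; simp [hA, mem_setOf_eq, mem_inter_iff]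
    rw [this]
    exact (measurableSet_le measurable_const hmnorm).inter
      (measurableSet_lt hmnorm measurable_const)
  have hsub : {z : ℂ | r₀ ≤ ‖z - ζ‖} ⊆ ⋃ n, A n := by
    intro z hz
    have hz' : r₀ ≤ ‖z - ζ‖ := hz
    have h1 : 1 ≤ ‖z - ζ‖ / r₀ := (one_le_div hr).2 hz'
    obtain ⟨m, hm⟩ := pow_unbounded_of_one_lt (‖z - ζ‖ / r₀) (one_lt_two (α := ℝ))
    have hex : ∃ n : ℕ, ‖z - ζ‖ / r₀ < 2 ^ (n + 1) :=
      ⟨m, hm.trans_le (pow_le_pow_right₀ one_le_two (Nat.le_succ m))⟩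
    classical
    set n := Nat.find hex with hn
    have hupper : ‖z - ζ‖ / r₀ < 2 ^ (n + 1) := Nat.find_spec hex
    have hlower : (2 : ℝ) ^ n ≤ ‖z - ζ‖ / r₀ := by
      rcases Nat.eq_zero_or_pos n with h0 | hpos
      · rw [h0]; simpa using h1
      · have h2 := Nat.find_min hex (show n - 1 < n by omega)
        push_neg at h2
        have hn1 : n - 1 + 1 = n := by omega
        rwa [hn1] at h2
    refine mem_iUnion.2 ⟨n, ?_, ?_⟩
    · rw [mul_comm, ← le_div_iff₀ hr]; exact hlower
    · rw [mul_comm, ← div_lt_iff₀ hr] at *; exact hupper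
  calc ∫⁻ z in {z : ℂ | r₀ ≤ ‖z - ζ‖}, ENNReal.ofReal ((‖z - ζ‖ ^ 3)⁻¹)
      ≤ ∫⁻ z in ⋃ n, A n, ENNReal.ofReal ((‖z - ζ‖ ^ 3)⁻¹) := lintegral_mono_set hsub
    _ ≤ ∑' n, ∫⁻ z in A n, ENNReal.ofReal ((‖z - ζ‖ ^ 3)⁻¹) := lintegral_iUnion_le _ _
    _ ≤ ∑' n, ENNReal.ofReal (4 * Real.pi / r₀ * (2⁻¹ : ℝ) ^ n) := by
        refine ENNReal.tsum_le_tsum fun n => ?_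
        have hpow : (0:ℝ) < r₀ * 2 ^ n := by positivity
        calc ∫⁻ z in A n, ENNReal.ofReal ((‖z - ζ‖ ^ 3)⁻¹)
            ≤ ∫⁻ _ in A n, ENNReal.ofReal (((r₀ * 2 ^ n) ^ 3)⁻¹) := by
              refine setLIntegral_mono' (hmeasA n) fun z hz => ?_
              refine ENNReal.ofReal_le_ofReal ?_
              have h1 : r₀ * 2 ^ n ≤ ‖z - ζ‖ := hz.1
              exact inv_anti₀ (by positivity) (pow_le_pow_left₀ hpow.le h1 3)
          _ = ENNReal.ofReal (((r₀ * 2 ^ n) ^ 3)⁻¹) * volume (A n) := setLIntegral_const _ _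
          _ ≤ ENNReal.ofReal (((r₀ * 2 ^ n) ^ 3)⁻¹) * volume (ball ζ (r₀ * 2 ^ (n + 1))) := by
              gcongr
              intro z hz
              have h2 : ‖z - ζ‖ < r₀ * 2 ^ (n + 1) := hz.2
              simpa [mem_ball, dist_eq_norm] using h2
          _ = ENNReal.ofReal (4 * Real.pi / r₀ * (2⁻¹ : ℝ) ^ n) := by
              rw [Complex.volume_ball]
              rw [← ENNReal.ofReal_pow (by positivity), ← ENNReal.ofReal_coe_nnreal,
                ← ENNReal.ofReal_mul (by positivity), ← ENNReal.ofReal_mul (by positivity)]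
              congr 1
              rw [NNReal.coe_real_pi]
              field_simp
              rw [one_div, inv_pow, eq_mul_inv_iff_mul_eq₀ (by positivity)]
              ring
    _ = ∑' n : ℕ, ENNReal.ofReal (4 * Real.pi / r₀) * ENNReal.ofReal ((2⁻¹ : ℝ) ^ n) := by
        congr 1; funext n; rw [← ENNReal.ofReal_mul (by positivity)]
    _ = ENNReal.ofReal (4 * Real.pi / r₀) * ENNReal.ofReal 2 := by
        rw [ENNReal.tsum_mul_left]
        congr 1
        rw [← ENNReal.ofReal_tsum_of_nonneg (fun n => by positivity)
          (summable_geometric_of_lt_one (by norm_num) (by norm_num)),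
          tsum_geometric_of_lt_one (by norm_num) (by norm_num)]
        norm_num
    _ = ENNReal.ofReal (8 * Real.pi / r₀) := by
        rw [← ENNReal.ofReal_mul (by positivity)]
        congr 1
        ring

lemma key {a : ℂ} (ha : ‖a‖ < 1) :
    ∫⁻ z in ball (0:ℂ) 1,
        ENNReal.ofReal (2 * ‖a‖ * (1 - Complex.normSq a) / ‖1 - (starRingEnd ℂ) a * z‖ ^ 3)
      ≤ 8 * volume (ball (0:ℂ) 1) + ENNReal.ofReal (128 * Real.pi) := by
  have hns : Complex.normSq a = ‖a‖ ^ 2 := by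
    rw [Complex.normSq_eq_norm_sq]
  have ha0 : (0:ℝ) ≤ ‖a‖ := norm_nonneg a
  rcases le_or_gt ‖a‖ 2⁻¹ with hsmall | hbig
  · calc ∫⁻ z in ball (0:ℂ) 1,
        ENNReal.ofReal (2 * ‖a‖ * (1 - Complex.normSq a) / ‖1 - (starRingEnd ℂ) a * z‖ ^ 3)
        ≤ ∫⁻ _ in ball (0:ℂ) 1, (8 : ℝ≥0∞) := by
          refine setLIntegral_mono' measurableSet_ball fun z hz => ?_
          have hz1 : ‖z‖ < 1 := by simpa [mem_ball, dist_eq_norm] using hz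
          have hden : (2⁻¹ : ℝ) ≤ ‖1 - (starRingEnd ℂ) a * z‖ := by
            have := den_lb a z
            nlinarith [norm_nonneg z]
          have hd3 : (2⁻¹ : ℝ) ^ 3 ≤ ‖1 - (starRingEnd ℂ) a * z‖ ^ 3 :=
            pow_le_pow_left₀ (by norm_num) hden 3
          have : 2 * ‖a‖ * (1 - Complex.normSq a) / ‖1 - (starRingEnd ℂ) a * z‖ ^ 3 ≤ 8 := by
            rw [div_le_iff₀ (by nlinarith)]
            nlinarith [Complex.normSq_nonneg a]
          calc ENNReal.ofReal _ ≤ ENNReal.ofReal (8:ℝ) := ENNReal.ofReal_le_ofReal this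
            _ = (8:ℝ≥0∞) := by norm_num
      _ = 8 * volume (ball (0:ℂ) 1) := setLIntegral_const _ _
      _ ≤ _ := le_self_add
  · have hca : (starRingEnd ℂ) a ≠ 0 := by
      simp only [ne_eq, map_eq_zero]
      intro h0; rw [h0] at hbig; simp at hbig; linarith
    set ζ : ℂ := ((starRingEnd ℂ) a)⁻¹ with hζdef
    have hζ : ‖ζ‖ = ‖a‖⁻¹ := by
      rw [hζdef, norm_inv, RCLike.norm_conj]
    have hapos : (0:ℝ) < ‖a‖ := lt_trans (by norm_num) hbig
    set r₀ : ℝ := (1 - ‖a‖) / ‖a‖ with hr₀def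
    have hr₀ : 0 < r₀ := div_pos (by linarith) hapos
    have hden : ∀ z : ℂ, ‖1 - (starRingEnd ℂ) a * z‖ = ‖a‖ * ‖z - ζ‖ := by
      intro z
      have : 1 - (starRingEnd ℂ) a * z = -((starRingEnd ℂ) a) * (z - ζ) := by
        rw [hζdef]; field_simp; ring
      rw [this, norm_mul, norm_neg, RCLike.norm_conj]
    have hsubset : ball (0:ℂ) 1 ⊆ {z : ℂ | r₀ ≤ ‖z - ζ‖} := by
      intro z hz
      have hz1 : ‖z‖ < 1 := by simpa [mem_ball, dist_eq_norm] using hz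
      have h1 : ‖ζ‖ - ‖z‖ ≤ ‖ζ - z‖ := norm_sub_norm_le _ _
      rw [norm_sub_rev] at h1
      rw [hζ] at h1
      have h2 : r₀ ≤ ‖a‖⁻¹ - ‖z‖ := by
        rw [hr₀def]
        have h3 : (1 - ‖a‖) / ‖a‖ = ‖a‖⁻¹ - 1 := by
          rw [sub_div, div_self hapos.ne', one_div]
        rw [h3]; linarith
      show r₀ ≤ ‖z - ζ‖
      linarith
    calc ∫⁻ z in ball (0:ℂ) 1,
        ENNReal.ofReal (2 * ‖a‖ * (1 - Complex.normSq a) / ‖1 - (starRingEnd ℂ) a * z‖ ^ 3)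
        ≤ ∫⁻ z in ball (0:ℂ) 1,
            ENNReal.ofReal (16 * (1 - ‖a‖)) * ENNReal.ofReal ((‖z - ζ‖ ^ 3)⁻¹) := by
          refine setLIntegral_mono' measurableSet_ball fun z hz => ?_
          have hz1 : ‖z‖ < 1 := by simpa [mem_ball, dist_eq_norm] using hz
          have hs : 0 < ‖z - ζ‖ := lt_of_lt_of_le hr₀ (hsubset hz)
          rw [← ENNReal.ofReal_mul (by nlinarith)]
          refine ENNReal.ofReal_le_ofReal ?_
          rw [hden z, hns]
          rw [div_le_iff₀ (by positivity)]
          have hrhs : 16 * (1 - ‖a‖) * (‖z - ζ‖ ^ 3)⁻¹ * (‖a‖ * ‖z - ζ‖) ^ 3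
              = 16 * (1 - ‖a‖) * ‖a‖ ^ 3 := by
            have hcancel : (‖z - ζ‖ ^ 3)⁻¹ * ‖z - ζ‖ ^ 3 = 1 := inv_mul_cancel₀ (by positivity)
            linear_combination (16 * (1 - ‖a‖) * ‖a‖ ^ 3) * hcancel
          rw [hrhs]
          have h8 : (0:ℝ) ≤ 8 * ‖a‖ ^ 2 - ‖a‖ - 1 := by
            nlinarith [mul_pos (sub_pos.2 hbig) hapos]
          nlinarith [mul_nonneg (mul_nonneg ha0 (by linarith : (0:ℝ) ≤ 1 - ‖a‖)) h8]
      _ = ENNReal.ofReal (16 * (1 - ‖a‖)) * ∫⁻ z in ball (0:ℂ) 1,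
            ENNReal.ofReal ((‖z - ζ‖ ^ 3)⁻¹) :=
          lintegral_const_mul' _ _ ENNReal.ofReal_ne_top
      _ ≤ ENNReal.ofReal (16 * (1 - ‖a‖)) * ∫⁻ z in {z : ℂ | r₀ ≤ ‖z - ζ‖},
            ENNReal.ofReal ((‖z - ζ‖ ^ 3)⁻¹) := by
          gcongr
      _ ≤ ENNReal.ofReal (16 * (1 - ‖a‖)) * ENNReal.ofReal (8 * Real.pi / r₀) := by
          gcongr
          exact annuli ζ hr₀
      _ ≤ ENNReal.ofReal (128 * Real.pi) := by
          rw [← ENNReal.ofReal_mul (by nlinarith)]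
          refine ENNReal.ofReal_le_ofReal ?_
          have h1ne : (1 - ‖a‖) ≠ 0 := by linarith
          have hdiv : 8 * Real.pi / r₀ = 8 * Real.pi * ‖a‖ / (1 - ‖a‖) := by
            rw [hr₀def]; field_simp
          rw [hdiv]
          have heq : 16 * (1 - ‖a‖) * (8 * Real.pi * ‖a‖ / (1 - ‖a‖)) = 128 * Real.pi * ‖a‖ := by
            have hcancel : (1 - ‖a‖)⁻¹ * (1 - ‖a‖) = 1 := inv_mul_cancel₀ h1ne
            linear_combination (128 * Real.pi * ‖a‖) * hcancel
          rw [heq]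
          nlinarith [Real.pi_pos]
      _ ≤ _ := le_add_self

end Stmt12Aux

open Stmt12Aux

/-- Let `{a_k} ⊂ D` and `{λ_k} ∈ ℓ¹`. Then the series
`g z = Σ_k λ_k (a_k - z)/(1 - conj (a_k) z)` converges on the unit disc and defines a
bounded analytic function on the disc belonging to the minimal Besov space `B¹`
(i.e. `∫_D |g''| dA < ∞`). -/
theorem stmt12
    (a : ℕ → ℂ) (ha : ∀ k, a k ∈ Metric.ball (0 : ℂ) 1)
    (lam : ℕ → ℂ) (hlam : Summable fun k => ‖lam k‖) :
    ∃ g : ℂ → ℂ,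
      (∀ z ∈ Metric.ball (0 : ℂ) 1,
        HasSum (fun k => lam k * ((a k - z) / (1 - (starRingEnd ℂ) (a k) * z))) (g z)) ∧
      DifferentiableOn ℂ g (Metric.ball (0 : ℂ) 1) ∧
      (∃ M : ℝ, ∀ z ∈ Metric.ball (0 : ℂ) 1, ‖g z‖ ≤ M) ∧
      IntegrableOn (fun z => ‖deriv (deriv g) z‖) (Metric.ball (0 : ℂ) 1)
        volume := by
  have ha' : ∀ k, ‖a k‖ < 1 := fun k => by
    simpa [mem_ball, dist_eq_norm] using ha k
  have hlam' : Summable fun k => ‖lam k‖ := by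
    simpa using hlam
  set f : ℕ → ℂ → ℂ :=
    fun k z => lam k * ((a k - z) / (1 - (starRingEnd ℂ) (a k) * z)) with hfdef
  set F1 : ℕ → ℂ → ℂ :=
    fun k z => lam k * (((Complex.normSq (a k) : ℂ) - 1)
      / (1 - (starRingEnd ℂ) (a k) * z) ^ 2) with hF1def
  set F2 : ℕ → ℂ → ℂ :=
    fun k z => lam k * (2 * (starRingEnd ℂ) (a k) * ((Complex.normSq (a k) : ℂ) - 1)
      / (1 - (starRingEnd ℂ) (a k) * z) ^ 3) with hF2def
  -- basic bound
  have hfb : ∀ (k : ℕ), ∀ w ∈ ball (0:ℂ) 1, ‖f k w‖ ≤ ‖lam k‖ := by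
    intro k w hw
    have hw1 : ‖w‖ < 1 := by simpa [mem_ball, dist_eq_norm] using hw
    rw [hfdef]
    simp only [norm_mul]
    calc ‖lam k‖ * ‖(a k - w) / (1 - (starRingEnd ℂ) (a k) * w)‖
        ≤ ‖lam k‖ * 1 := by
          gcongr
          exact phi_le_one (ha' k) hw1
      _ = ‖lam k‖ := mul_one _
  -- derivatives
  have hfd : ∀ (k : ℕ) (w : ℂ), ‖w‖ < 1 → HasDerivAt (f k) (F1 k w) w := fun k w hw =>
    (hasDerivAt_phi (a k) (den_ne (ha' k) hw)).const_mul (lam k)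
  have hF1d : ∀ (k : ℕ) (w : ℂ), ‖w‖ < 1 → HasDerivAt (F1 k) (F2 k w) w := fun k w hw => by
    have := (hasDerivAt_phi' (a k) (den_ne (ha' k) hw)).const_mul (lam k)
    simpa [hF1def, hF2def, mul_div_assoc] using this
  refine ⟨fun z => ∑' k, f k z, ?_, ?_, ?_, ?_⟩
  · -- HasSum
    intro z hz
    have hsummable : Summable fun k => f k z :=
      Summable.of_norm_bounded hlam' (fun k => hfb k z hz)
    exact hsummable.hasSum
  · -- DifferentiableOn
    exact differentiableOn_tsum_of_summable_norm hlam'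
      (fun k z hz =>
        ((hfd k z (by simpa [mem_ball, dist_eq_norm] using hz)).differentiableAt.differentiableWithinAt))
      isOpen_ball hfb
  · -- bounded
    refine ⟨∑' k, ‖lam k‖, fun z hz => ?_⟩
    have hsummable : Summable fun k => ‖f k z‖ :=
      Summable.of_nonneg_of_le (fun k => norm_nonneg _) (fun k => hfb k z hz) hlam'
    calc ‖∑' k, f k z‖ ≤ ∑' k, ‖f k z‖ := norm_tsum_le_tsum_norm hsummable
      _ ≤ ∑' k, ‖lam k‖ := Summable.tsum_le_tsum (fun k => hfb k z hz) hsummable hlam'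
  · -- Besov : integrability of second derivative
    have hG1 : ∀ z ∈ ball (0:ℂ) 1, deriv (fun w => ∑' k, f k w) z = ∑' k, F1 k z := by
      intro z hz
      have hz1 : ‖z‖ < 1 := by simpa [mem_ball, dist_eq_norm] using hz
      have hs := Complex.hasSum_deriv_of_summable_norm (u := fun k => ‖lam k‖) hlam'
        (fun k w hw =>
          ((hfd k w (by simpa [mem_ball, dist_eq_norm] using hw)).differentiableAt.differentiableWithinAt))
        isOpen_ball hfb hz
      have heq : (fun k => deriv (f k) z) = fun k => F1 k z :=
        funext fun k => (hfd k z hz1).deriv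
      rw [heq] at hs
      exact hs.tsum_eq.symm
    have hG2 : ∀ z ∈ ball (0:ℂ) 1, deriv (deriv (fun w => ∑' k, f k w)) z = ∑' k, F2 k z := by
      intro z hz
      have hz1 : ‖z‖ < 1 := by simpa [mem_ball, dist_eq_norm] using hz
      set r : ℝ := (‖z‖ + 1) / 2 with hrdef
      have hr1 : r < 1 := by rw [hrdef]; linarith
      have hr0 : 0 < 1 - r := by linarith
      have hzr : z ∈ ball (0:ℂ) r := by
        rw [mem_ball, dist_eq_norm, sub_zero, hrdef]; linarith
      have hmem : ∀ w ∈ ball (0:ℂ) r, ‖w‖ < 1 := fun w hw =>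
        lt_trans (by simpa [mem_ball, dist_eq_norm] using hw) hr1
      have hev : deriv (fun w => ∑' k, f k w) =ᶠ[nhds z] fun w => ∑' k, F1 k w := by
        filter_upwards [isOpen_ball.mem_nhds hz] with w hw
        exact hG1 w hw
      rw [hev.deriv_eq]
      have hbF1 : ∀ (k : ℕ), ∀ w ∈ ball (0:ℂ) r, ‖F1 k w‖ ≤ ‖lam k‖ * ((1 - r) ^ 2)⁻¹ := by
        intro k w hw
        have hwr : ‖w‖ < r := by simpa [mem_ball, dist_eq_norm] using hw
        have hw1 : ‖w‖ < 1 := hmem w hw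
        have hden : 1 - r ≤ ‖1 - (starRingEnd ℂ) (a k) * w‖ := by
          have h1 := den_lb (a k) w
          nlinarith [norm_nonneg (a k), norm_nonneg w, ha' k]
        have hnum : ‖((Complex.normSq (a k) : ℂ) - 1)‖ ≤ 1 := by
          rw [norm_normSq_sub_one (ha' k)]
          nlinarith [Complex.normSq_nonneg (a k)]
        rw [hF1def]
        simp only [norm_mul, norm_div, norm_pow]
        gcongr
        rw [inv_eq_one_div]
        exact div_le_div₀ zero_le_one hnum (pow_pos hr0 2) (pow_le_pow_left₀ hr0.le hden 2)
      have hs := Complex.hasSum_deriv_of_summable_norm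
        (u := fun k => ‖lam k‖ * ((1 - r) ^ 2)⁻¹) (hlam'.mul_right _)
        (fun k w hw =>
          ((hF1d k w (hmem w hw)).differentiableAt.differentiableWithinAt))
        isOpen_ball hbF1 hzr
      have heq : (fun k => deriv (F1 k) z) = fun k => F2 k z :=
        funext fun k => (hF1d k z hz1).deriv
      rw [heq] at hs
      exact hs.tsum_eq.symm
    -- norm identity for F2
    have hnormF2 : ∀ (k : ℕ) (z : ℂ), ‖F2 k z‖
        = ‖lam k‖ * (2 * ‖a k‖ * (1 - Complex.normSq (a k))
          / ‖1 - (starRingEnd ℂ) (a k) * z‖ ^ 3) := by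
      intro k z
      rw [hF2def]
      simp only [norm_mul, norm_div, norm_pow, RCLike.norm_conj,
        norm_normSq_sub_one (ha' k)]
      norm_num
    have hmF2 : ∀ k : ℕ, Measurable (F2 k) := by
      intro k
      rw [hF2def]
      fun_prop
    constructor
    · -- measurability
      have hm : Measurable (deriv (deriv fun w => ∑' k, f k w)) := measurable_deriv _
      exact hm.norm.aestronglyMeasurable.restrict
    · -- finite integral
      rw [hasFiniteIntegral_iff_norm]
      have hboundz : ∀ z : ℂ, ‖z‖ < 1 → Summable fun k => ‖F2 k z‖ := by
        intro z hz1
        refine Summable.of_nonneg_of_le (fun k => norm_nonneg _)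
          (fun k => ?_) (hlam'.mul_right (2 * ((1 - ‖z‖) ^ 3)⁻¹))
        rw [hnormF2 k z]
        have hden : 1 - ‖z‖ ≤ ‖1 - (starRingEnd ℂ) (a k) * z‖ := by
          have h1 := den_lb (a k) z
          nlinarith [norm_nonneg (a k), norm_nonneg z, ha' k]
        have hnum : 2 * ‖a k‖ * (1 - Complex.normSq (a k)) ≤ 2 := by
          nlinarith [Complex.normSq_nonneg (a k), norm_nonneg (a k), ha' k]
        gcongr
        refine le_trans (div_le_div₀ (by norm_num) hnum (pow_pos (by linarith : (0:ℝ) < 1 - ‖z‖) 3)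
          (pow_le_pow_left₀ (by linarith) hden 3)) (le_of_eq ?_)
        rw [div_eq_mul_inv, mul_comm]
      calc ∫⁻ z in ball (0:ℂ) 1,
            ENNReal.ofReal ‖‖deriv (deriv fun w => ∑' k, f k w) z‖‖
          = ∫⁻ z in ball (0:ℂ) 1, ENNReal.ofReal ‖∑' k, F2 k z‖ := by
            refine setLIntegral_congr_fun measurableSet_ball (fun z hz => ?_)
            rw [norm_norm, hG2 z hz]
        _ ≤ ∫⁻ z in ball (0:ℂ) 1, ∑' k, ENNReal.ofReal ‖F2 k z‖ := by
            refine setLIntegral_mono' measurableSet_ball fun z hz => ?_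
            have hz1 : ‖z‖ < 1 := by simpa [mem_ball, dist_eq_norm] using hz
            calc ENNReal.ofReal ‖∑' k, F2 k z‖
                ≤ ENNReal.ofReal (∑' k, ‖F2 k z‖) :=
                  ENNReal.ofReal_le_ofReal (norm_tsum_le_tsum_norm (hboundz z hz1))
              _ = ∑' k, ENNReal.ofReal ‖F2 k z‖ :=
                  ENNReal.ofReal_tsum_of_nonneg (fun k => norm_nonneg _) (hboundz z hz1)
        _ = ∑' k, ∫⁻ z in ball (0:ℂ) 1, ENNReal.ofReal ‖F2 k z‖ :=
            lintegral_tsum fun k => ((hmF2 k).norm.ennreal_ofReal).aemeasurable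
        _ ≤ ∑' k, ENNReal.ofReal ‖lam k‖
              * (8 * volume (ball (0:ℂ) 1) + ENNReal.ofReal (128 * Real.pi)) := by
            refine ENNReal.tsum_le_tsum fun k => ?_
            calc ∫⁻ z in ball (0:ℂ) 1, ENNReal.ofReal ‖F2 k z‖
                = ∫⁻ z in ball (0:ℂ) 1, ENNReal.ofReal ‖lam k‖
                    * ENNReal.ofReal (2 * ‖a k‖ * (1 - Complex.normSq (a k))
                      / ‖1 - (starRingEnd ℂ) (a k) * z‖ ^ 3) := by
                  refine lintegral_congr fun z => ?_
                  rw [hnormF2 k z, ENNReal.ofReal_mul (norm_nonneg _)]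
              _ = ENNReal.ofReal ‖lam k‖ * ∫⁻ z in ball (0:ℂ) 1,
                    ENNReal.ofReal (2 * ‖a k‖ * (1 - Complex.normSq (a k))
                      / ‖1 - (starRingEnd ℂ) (a k) * z‖ ^ 3) :=
                  lintegral_const_mul' _ _ ENNReal.ofReal_ne_top
              _ ≤ _ := mul_le_mul_right (key (ha' k)) _
        _ = (∑' k, ENNReal.ofReal ‖lam k‖)
              * (8 * volume (ball (0:ℂ) 1) + ENNReal.ofReal (128 * Real.pi)) :=
            ENNReal.tsum_mul_right
        _ < ⊤ := by
            refine ENNReal.mul_lt_top ?_ ?_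
            · rw [← ENNReal.ofReal_tsum_of_nonneg (fun k => norm_nonneg _) hlam']
              exact ENNReal.ofReal_lt_top
            · refine ENNReal.add_lt_top.2 ⟨?_, ENNReal.ofReal_lt_top⟩
              exact ENNReal.mul_lt_top (by norm_num) measure_ball_lt_top
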